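/- Let (A,ℝ,α) be a minimal C* dynamical system where A is a unital commutative C*-algebra. Then the set {0} ∪ { t ∈ ℝ \ {0} : α_{1/t} is not minimal } is a ℚ-linear subspace of ℝ, i.e., it contains 0, is closed under addition, and is closed under multiplication by rational numbers. -/

import Mathlib

set_option linter.unusedSectionVars false
set_option linter.unusedVariables false
set_option maxHeartbeats 1000000


section Flow
variable {X : Type*} [TopologicalSpace X] [CompactSpace X] [T2Space X]
variable (T : ℝ → X → X)

theorem flow_image_comp (hadd : ∀ t u : ℝ, ∀ x, T (t + u) x = T t (T u x))
    (t u : ℝ) (s : Set X) : T t '' (T u '' s) = T (t + u) '' s := by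
  rw [Set.image_image]; exact Set.image_congr fun x _ => (hadd t u x).symm

theorem flow_image_zero (h0 : ∀ x, T 0 x = x) (s : Set X) : T 0 '' s = s := by
  have : T 0 = id := funext h0
  rw [this, Set.image_id]

theorem flow_image_cancel (hadd : ∀ t u : ℝ, ∀ x, T (t + u) x = T t (T u x))
    (h0 : ∀ x, T 0 x = x) (t : ℝ) (s : Set X) : T t '' (T (-t) '' s) = s := by
  rw [flow_image_comp T hadd, add_neg_cancel, flow_image_zero T h0]

theorem flow_image_cancel' (hadd : ∀ t u : ℝ, ∀ x, T (t + u) x = T t (T u x))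
    (h0 : ∀ x, T 0 x = x) (t : ℝ) (s : Set X) : T (-t) '' (T t '' s) = s := by
  rw [flow_image_comp T hadd, neg_add_cancel, flow_image_zero T h0]

theorem flow_cont_x (hT : Continuous fun p : ℝ × X => T p.1 p.2) (t : ℝ) :
    Continuous (T t) := hT.comp (continuous_const.prodMk continuous_id)

theorem flow_cont_t (hT : Continuous fun p : ℝ × X => T p.1 p.2) (m : X) :
    Continuous fun t => T t m := hT.comp (continuous_id.prodMk continuous_const)

theorem flow_image_closed (hT : Continuous fun p : ℝ × X => T p.1 p.2) (t : ℝ)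
    {s : Set X} (hs : IsClosed s) : IsClosed (T t '' s) :=
  (hs.isCompact.image (flow_cont_x T hT t)).isClosed

theorem flow_zsmul (hadd : ∀ t u : ℝ, ∀ x, T (t + u) x = T t (T u x))
    (h0 : ∀ x, T 0 x = x) {s : ℝ} {N : Set X} (hN : T s '' N = N) (k : ℤ) :
    T (k * s) '' N = N := by
  induction k using Int.induction_on with
  | zero => simpa using flow_image_zero T h0 N
  | succ k ih =>
      have : ((k : ℤ) + 1 : ℤ) * s = s + (k : ℤ) * s := by push_cast; ring
      rw [this, ← flow_image_comp T hadd, ih, hN]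
  | pred k ih =>
      push_cast at ih ⊢
      rw [show (-(k:ℝ) - 1) * s = -s + -(k:ℝ) * s by ring, ← flow_image_comp T hadd, ih]
      conv_lhs => rw [← hN]
      rw [flow_image_cancel' T hadd h0]

/-- Existence of a minimal set -/
theorem flow_minimal_set (hT : Continuous fun p : ℝ × X => T p.1 p.2)
    (hadd : ∀ t u : ℝ, ∀ x, T (t + u) x = T t (T u x)) (h0 : ∀ x, T 0 x = x)
    {s : ℝ} {F : Set X} (hF : IsClosed F) (hFne : F.Nonempty) (hFinv : T s '' F = F) :
    ∃ M, M ⊆ F ∧ M.Nonempty ∧ IsClosed M ∧ T s '' M = M ∧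
      ∀ K, K ⊆ M → K.Nonempty → IsClosed K → T s '' K = K → K = M := by
  have hinv : ∀ x, T (-s) (T s x) = x := fun x => by
    rw [← hadd, neg_add_cancel, h0]
  have hinv2 : ∀ x, T s (T (-s) x) = x := fun x => by
    rw [← hadd, add_neg_cancel, h0]
  set 𝒮 : Set (Set X) := {K | K ⊆ F ∧ K.Nonempty ∧ IsClosed K ∧ T s '' K = K} with h𝒮
  obtain ⟨M, -, hM⟩ := zorn_superset_nonempty 𝒮 (fun c hc hchain hcne => by
    refine ⟨⋂₀ c, ⟨?_, ?_, ?_, ?_⟩, fun K hK => Set.sInter_subset_of_mem hK⟩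
    · obtain ⟨K, hK⟩ := hcne
      exact (Set.sInter_subset_of_mem hK).trans (hc hK).1
    · haveI : Nonempty c := hcne.to_subtype
      refine IsCompact.nonempty_sInter_of_directed_nonempty_isCompact_isClosed
        ?_ (fun U hU => (hc hU).2.1) (fun U hU => (hc hU).2.2.1.isCompact)
        (fun U hU => (hc hU).2.2.1)
      exact IsChain.directedOn hchain.symm
    · exact isClosed_sInter fun U hU => (hc hU).2.2.1
    · apply Set.Subset.antisymm
      · intro y hy
        obtain ⟨x, hx, rfl⟩ := hy
        intro K hK
        rw [← (hc hK).2.2.2]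
        exact ⟨x, hx K hK, rfl⟩
      · intro x hx
        refine ⟨T (-s) x, fun K hK => ?_, hinv2 x⟩
        have hxK := hx K hK
        rw [← (hc hK).2.2.2] at hxK
        obtain ⟨y, hy, rfl⟩ := hxK
        rw [hinv]
        exact hy) F ⟨Set.Subset.rfl, hFne, hF, hFinv⟩
  refine ⟨M, hM.prop.1, hM.prop.2.1, hM.prop.2.2.1, hM.prop.2.2.2, fun K hKM hKne hKcl hKinv => ?_⟩
  exact Set.Subset.antisymm hKM
    (hM.le_of_le ⟨hKM.trans hM.prop.1, hKne, hKcl, hKinv⟩ hKM)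

/-- two translates of a minimal set that intersect are equal. -/
theorem flow_translates_eq (hT : Continuous fun p : ℝ × X => T p.1 p.2)
    (hadd : ∀ t u : ℝ, ∀ x, T (t + u) x = T t (T u x)) (h0 : ∀ x, T 0 x = x)
    {s : ℝ} {F M : Set X} (hMF : M ⊆ F) (hMne : M.Nonempty) (hMcl : IsClosed M)
    (hMinv : T s '' M = M)
    (hMmin : ∀ K, K ⊆ M → K.Nonempty → IsClosed K → T s '' K = K → K = M)
    {t t' : ℝ} {z : X} (hz : z ∈ T t '' M) (hz' : z ∈ T t' '' M) :
    T t '' M = T t' '' M := by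
  set O : Set X := Set.range fun k : ℤ => T (k * s) z with hO
  set N : Set X := closure O with hNdef
  have hNinv : T s '' N = N := by
    have h1 : T s '' N ⊆ N := by
      refine (image_closure_subset_closure_image (flow_cont_x T hT s)).trans ?_
      apply closure_mono
      rintro - ⟨-, ⟨k, rfl⟩, rfl⟩
      refine ⟨k + 1, ?_⟩
      show T ((k + 1 : ℤ) * s) z = T s (T (k * s) z)
      rw [show ((k + 1 : ℤ) : ℝ) * s = s + (k : ℤ) * s by push_cast; ring, hadd]
    have h2 : T (-s) '' N ⊆ N := by
      refine (image_closure_subset_closure_image (flow_cont_x T hT (-s))).trans ?_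
      apply closure_mono
      rintro - ⟨-, ⟨k, rfl⟩, rfl⟩
      refine ⟨k - 1, ?_⟩
      show T ((k - 1 : ℤ) * s) z = T (-s) (T (k * s) z)
      rw [show ((k - 1 : ℤ) : ℝ) * s = -s + (k : ℤ) * s by push_cast; ring, hadd]
    refine Set.Subset.antisymm h1 ?_
    have := Set.image_mono (f := T s) h2
    rwa [flow_image_cancel T hadd h0] at this
  have hNne : N.Nonempty := ⟨z, subset_closure ⟨0, by simp [h0]⟩⟩
  have key : ∀ u : ℝ, z ∈ T u '' M → T u '' M = N := by
    intro u hzu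
    have hTuM_inv : T s '' (T u '' M) = T u '' M := by
      rw [flow_image_comp T hadd, add_comm, ← flow_image_comp T hadd, hMinv]
    have hNsub : N ⊆ T u '' M := by
      refine closure_minimal ?_ (flow_image_closed T hT u hMcl)
      rintro - ⟨k, rfl⟩
      rw [← flow_zsmul T hadd h0 hTuM_inv k]
      exact ⟨z, hzu, rfl⟩
    have hKsub : T (-u) '' N ⊆ M := by
      have := Set.image_mono (f := T (-u)) hNsub
      rwa [flow_image_cancel' T hadd h0] at this
    have hK : T (-u) '' N = M := by
      refine hMmin _ hKsub (hNne.image _) (flow_image_closed T hT _ (isClosed_closure)) ?_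
      rw [flow_image_comp T hadd, add_comm, ← flow_image_comp T hadd, hNinv]
    calc T u '' M = T u '' (T (-u) '' N) := by rw [hK]
    _ = N := flow_image_cancel T hadd h0 u N
  rw [key t hz, key t' hz']

/-- Main direction: a proper closed sub-invariant set for time-s gives an eigenvalue. -/
theorem flow_bad_to_eigen (hT : Continuous fun p : ℝ × X => T p.1 p.2)
    (hadd : ∀ t u : ℝ, ∀ x, T (t + u) x = T t (T u x)) (h0 : ∀ x, T 0 x = x)
    (hmin : ∀ G : Set X, IsClosed G → G.Nonempty → (∀ t, T t '' G ⊆ G) → G = Set.univ)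
    {s : ℝ} (hs : s ≠ 0) {F : Set X} (hF : IsClosed F) (hFne : F.Nonempty)
    (hFproper : F ≠ Set.univ) (hFinv : T s '' F ⊆ F) :
    ∃ c : ℝ, c ≠ 0 ∧ (∃ k : ℤ, k ≠ 0 ∧ c * s = 2 * Real.pi * k) ∧
      ∃ f : X → ℂ, Continuous f ∧ (∀ x, ‖f x‖ = 1) ∧
        ∀ t x, f (T t x) = Complex.exp ((c * t : ℝ) * Complex.I) * f x := by
  -- Step 1 : a closed nonempty proper set with T s '' F' = F'
  set g : ℕ → Set X := fun n => T ((n : ℝ) * s) '' F with hg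
  have hg0 : g 0 = F := by
    simp only [hg, Nat.cast_zero, zero_mul]
    exact flow_image_zero T h0 F
  have hgsucc : ∀ n : ℕ, g (n + 1) = T s '' g n := by
    intro n
    rw [hg]
    simp only
    rw [flow_image_comp T hadd, show s + (n : ℝ) * s = ((n + 1 : ℕ) : ℝ) * s by push_cast; ring]
  have hganti : ∀ n : ℕ, g (n + 1) ⊆ g n := by
    intro n
    induction n with
    | zero => rw [hgsucc, hg0]; exact hFinv
    | succ n ih =>
        rw [hgsucc (n + 1)]
        conv_rhs => rw [hgsucc n]
        exact Set.image_mono ih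
  have hgcl : ∀ n, IsClosed (g n) := fun n => flow_image_closed T hT _ hF
  have hgne : ∀ n, (g n).Nonempty := fun n => hFne.image _
  set F' : Set X := ⋂ n : ℕ, g n with hF'
  have hF'cl : IsClosed F' := isClosed_iInter hgcl
  have hF'ne : F'.Nonempty := by
    refine IsCompact.nonempty_iInter_of_directed_nonempty_isCompact_isClosed g
      ?_ hgne (fun n => (hgcl n).isCompact) hgcl
    exact (antitone_nat_of_succ_le hganti).directed_ge
  have hF'F : F' ⊆ F := hg0 ▸ Set.iInter_subset g 0
  have hF'inv : T s '' F' = F' := by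
    apply Set.Subset.antisymm
    · rintro - ⟨x, hx, rfl⟩
      refine Set.mem_iInter.2 fun n => hganti n ?_
      rw [hgsucc]
      exact ⟨x, Set.mem_iInter.1 hx n, rfl⟩
    · intro x hx
      have hx' : T (-s) x ∈ F' := by
        refine Set.mem_iInter.2 fun n => ?_
        have h1 : x ∈ g (n + 1) := Set.mem_iInter.1 hx (n + 1)
        rw [hgsucc] at h1
        obtain ⟨y, hy, rfl⟩ := h1
        have : T (-s) (T s y) = y := by rw [← hadd, neg_add_cancel, h0]
        rwa [this]
      refine ⟨T (-s) x, hx', ?_⟩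
      rw [← hadd, add_neg_cancel, h0]
  -- Step 2 : minimal set
  obtain ⟨M, hMF', hMne, hMcl, hMinv, hMmin⟩ :=
    flow_minimal_set T hT hadd h0 hF'cl hF'ne hF'inv
  have hMF : M ⊆ F := hMF'.trans hF'F
  -- Step 3 : the stabilizer subgroup
  set Gc : Set ℝ := {u : ℝ | T u '' M = M} with hGc
  have hGc_eq : Gc = {u : ℝ | (∀ m ∈ M, T u m ∈ M) ∧ ∀ m ∈ M, T (-u) m ∈ M} := by
    ext u
    constructor
    · intro (hu : T u '' M = M)
      have hu' : T (-u) '' M = M := by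
        conv_lhs => rw [← hu]
        exact flow_image_cancel' T hadd h0 u M
      exact ⟨fun m hm => hu ▸ ⟨m, hm, rfl⟩, fun m hm => hu' ▸ ⟨m, hm, rfl⟩⟩
    · rintro ⟨h1, h2⟩
      have hsub : T u '' M ⊆ M := by rintro - ⟨m, hm, rfl⟩; exact h1 m hm
      have hsub' : T (-u) '' M ⊆ M := by rintro - ⟨m, hm, rfl⟩; exact h2 m hm
      refine Set.Subset.antisymm hsub ?_
      have := Set.image_mono (f := T u) hsub'
      rwa [flow_image_cancel T hadd h0] at this
  have hGc_closed : IsClosed Gc := by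
    rw [hGc_eq]
    have e1 : {u : ℝ | ∀ m ∈ M, T u m ∈ M} = ⋂ m ∈ M, {u : ℝ | T u m ∈ M} := by
      ext u; simp
    have e2 : {u : ℝ | ∀ m ∈ M, T (-u) m ∈ M} = ⋂ m ∈ M, {u : ℝ | T (-u) m ∈ M} := by
      ext u; simp
    have : {u : ℝ | (∀ m ∈ M, T u m ∈ M) ∧ ∀ m ∈ M, T (-u) m ∈ M}
        = {u : ℝ | ∀ m ∈ M, T u m ∈ M} ∩ {u : ℝ | ∀ m ∈ M, T (-u) m ∈ M} := rfl
    rw [this, e1, e2]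
    refine IsClosed.inter ?_ ?_
    · exact isClosed_biInter fun m _ => hMcl.preimage (flow_cont_t T hT m)
    · exact isClosed_biInter fun m _ =>
        hMcl.preimage ((flow_cont_t T hT m).comp continuous_neg)
  set G : AddSubgroup ℝ :=
    { carrier := Gc
      zero_mem' := by
        show T 0 '' M = M
        exact flow_image_zero T h0 M
      add_mem' := by
        intro u v (hu : T u '' M = M) (hv : T v '' M = M)
        show T (u + v) '' M = M
        rw [← flow_image_comp T hadd, hv, hu]
      neg_mem' := by
        intro u (hu : T u '' M = M)
        show T (-u) '' M = M
        conv_lhs => rw [← hu]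
        exact flow_image_cancel' T hadd h0 u M } with hG
  have hsG : T s '' M = M := hMinv
  have hGne : ∃ u : ℝ, T u '' M ≠ M := by
    by_contra hall
    push_neg at hall
    have : M = Set.univ := hmin M hMcl hMne fun t => (hall t).le
    exact hFproper (Set.eq_univ_of_univ_subset (this ▸ hMF))
  obtain ⟨a, hGa⟩ : ∃ a : ℝ, G = AddSubgroup.closure {a} := by
    rcases AddSubgroup.dense_or_cyclic G with hdense | hcyc
    · exfalso
      obtain ⟨u, hu⟩ := hGne
      have hGuniv : Gc = Set.univ := by
        rw [← hGc_closed.closure_eq]; exact hdense.closure_eq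
      exact hu (by have : u ∈ Gc := by rw [hGuniv]; trivial
                   exact this)
    · exact hcyc
  have hsmem : s ∈ G := hsG
  obtain ⟨k, hk⟩ : ∃ k : ℤ, k • a = s := by
    rw [hGa] at hsmem
    exact (AddSubgroup.mem_closure_singleton).1 hsmem
  have ha : a ≠ 0 := by
    rintro rfl
    rw [smul_zero] at hk
    exact hs hk.symm
  have hkne : k ≠ 0 := by
    rintro rfl
    rw [zero_smul] at hk
    exact hs hk.symm
  have haM : T a '' M = M := by
    have : a ∈ G := hGa ▸ AddSubgroup.subset_closure rfl
    exact this
  have hNmul : ∀ j : ℤ, T ((j : ℝ) * a) '' M = M := flow_zsmul T hadd h0 haM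
  -- Step 4 : reduction mod a
  set b : ℝ := |a| with hb
  have hbpos : 0 < b := abs_pos.2 ha
  have hred : ∀ u : ℝ, ∃ t : ℝ, ∃ j : ℤ, t ∈ Set.Icc 0 b ∧ u = t + (j : ℝ) * a := by
    intro u
    set j' : ℤ := ⌊u / b⌋ with hj'
    set t : ℝ := u - (j' : ℝ) * b with ht
    have h1 : 0 ≤ t := by
      rw [ht, sub_nonneg]
      exact (le_div_iff₀ hbpos).1 (Int.floor_le (u / b))
    have h2 : t ≤ b := by
      rw [ht, sub_le_iff_le_add]
      have := (Int.lt_floor_add_one (u / b)).le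
      calc u = (u / b) * b := by field_simp
      _ ≤ ((j' : ℝ) + 1) * b := by
          apply mul_le_mul_of_nonneg_right this hbpos.le
      _ = b + (j' : ℝ) * b := by ring
    rcases abs_choice a with hc | hc
    · exact ⟨t, j', ⟨h1, h2⟩, by rw [ht, hb, hc]; ring⟩
    · exact ⟨t, -j', ⟨h1, h2⟩, by rw [ht, hb, hc]; push_cast; ring⟩
  -- Step 5 : covering
  set N : Set X := (fun p : ℝ × X => T p.1 p.2) '' (Set.Icc 0 b ×ˢ M) with hN
  have hNcl : IsClosed N := ((isCompact_Icc.prod hMcl.isCompact).image hT).isClosed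
  have hNne : N.Nonempty := by
    obtain ⟨m, hm⟩ := hMne
    exact ⟨m, ⟨(0, m), ⟨Set.left_mem_Icc.2 hbpos.le, hm⟩, h0 m⟩⟩
  have hNmem : ∀ t (m : X), m ∈ M → T t m ∈ N := by
    intro t m hm
    obtain ⟨t', j, ht', hdecomp⟩ := hred t
    have hmem : T ((j : ℝ) * a) m ∈ M := (hNmul j) ▸ ⟨m, hm, rfl⟩
    refine ⟨(t', T ((j : ℝ) * a) m), ⟨ht', hmem⟩, ?_⟩
    show T t' (T ((j : ℝ) * a) m) = T t m
    rw [← hadd, ← hdecomp]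
  have hNinv : ∀ u, T u '' N ⊆ N := by
    rintro u - ⟨-, ⟨⟨t, m⟩, ⟨ht, hm⟩, rfl⟩, rfl⟩
    show T u (T t m) ∈ N
    rw [← hadd]
    exact hNmem (u + t) m hm
  have hNuniv : N = Set.univ := hmin N hNcl hNne hNinv
  have hcover : ∀ x : X, ∃ t : ℝ, ∃ m : X, t ∈ Set.Icc 0 b ∧ m ∈ M ∧ T t m = x := by
    intro x
    have : x ∈ N := hNuniv ▸ Set.mem_univ x
    obtain ⟨⟨t, m⟩, ⟨ht, hm⟩, hx⟩ := this
    exact ⟨t, m, ht, hm, hx⟩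
  choose τ μ hτ hμ hTτμ using hcover
  -- Step 6 : well-definedness
  have wd : ∀ (t t' : ℝ) (m m' : X), m ∈ M → m' ∈ M → T t m = T t' m' →
      ∃ j : ℤ, t - t' = (j : ℝ) * a := by
    intro t t' m m' hm hm' heq
    have hz : T t m ∈ T t '' M := ⟨m, hm, rfl⟩
    have hz' : T t m ∈ T t' '' M := heq ▸ ⟨m', hm', rfl⟩
    have htrans := flow_translates_eq T hT hadd h0 hMF hMne hMcl hMinv hMmin hz hz'
    have hdiff : T (t - t') '' M = M := by
      have e1 : T (t - t') '' M = T (-t') '' (T t '' M) := by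
        rw [flow_image_comp T hadd]; ring_nf
      rw [e1, htrans, flow_image_cancel' T hadd h0]
    have : (t - t') ∈ G := hdiff
    rw [hGa] at this
    obtain ⟨j, hj⟩ := (AddSubgroup.mem_closure_singleton).1 this
    exact ⟨j, by rw [← hj, zsmul_eq_mul]⟩
  set c : ℝ := 2 * Real.pi / a with hc
  have hcne : c ≠ 0 := div_ne_zero (by positivity) ha
  have hexp_eq : ∀ t t' : ℝ, (∃ j : ℤ, t - t' = (j : ℝ) * a) →
      Complex.exp ((c * t : ℝ) * Complex.I) = Complex.exp ((c * t' : ℝ) * Complex.I) := by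
    rintro t t' ⟨j, hj⟩
    rw [Complex.exp_eq_exp_iff_exists_int]
    refine ⟨j, ?_⟩
    have hr : c * t = c * t' + (j : ℝ) * (2 * Real.pi) := by
      have : c * t - c * t' = c * (t - t') := by ring
      have h2 : c * (t - t') = (j : ℝ) * (2 * Real.pi) := by
        rw [hj, hc]; field_simp
      linarith [this ▸ h2]
    rw [hr]
    push_cast
    ring
  set f : X → ℂ := fun x => Complex.exp ((c * τ x : ℝ) * Complex.I) with hf
  have fval : ∀ (t : ℝ) (m : X), m ∈ M → f (T t m) = Complex.exp ((c * t : ℝ) * Complex.I) := by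
    intro t m hm
    exact hexp_eq _ _ (wd (τ (T t m)) t (μ (T t m)) m (hμ _) hm (hTτμ _))
  have habs : ∀ x, ‖f x‖ = 1 := fun x => Complex.norm_exp_ofReal_mul_I _
  have heigen : ∀ (t : ℝ) (x : X),
      f (T t x) = Complex.exp ((c * t : ℝ) * Complex.I) * f x := by
    intro t x
    have hx : T (τ x) (μ x) = x := hTτμ x
    have : T t x = T (t + τ x) (μ x) := by rw [hadd, hx]
    rw [this, fval _ _ (hμ x)]
    show Complex.exp ((c * (t + τ x) : ℝ) * Complex.I) = _
    rw [hf]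
    simp only
    rw [← Complex.exp_add]
    congr 1
    push_cast
    ring
  -- Step 7 : continuity of f via compact graph
  have hfc : Continuous f := by
    set GR : Set (X × ℂ) :=
      (fun p : ℝ × X => (T p.1 p.2, Complex.exp ((c * p.1 : ℝ) * Complex.I))) ''
        (Set.Icc 0 b ×ˢ M) with hGR
    have hGRc : IsCompact GR := by
      refine (isCompact_Icc.prod hMcl.isCompact).image ?_
      refine hT.prodMk ?_
      exact Complex.continuous_exp.comp
        ((Complex.continuous_ofReal.comp (continuous_const.mul continuous_fst)).mul
          continuous_const)
    have hGRgraph : GR = {q : X × ℂ | q.2 = f q.1} := by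
      ext ⟨x, w⟩
      constructor
      · rintro ⟨⟨t, m⟩, ⟨ht, hm⟩, heq⟩
        have h1 : T t m = x := congrArg Prod.fst heq
        have h2 : Complex.exp ((c * t : ℝ) * Complex.I) = w := congrArg Prod.snd heq
        show w = f x
        rw [← h1, ← h2, fval t m hm]
      · intro hw
        refine ⟨(τ x, μ x), ⟨hτ x, hμ x⟩, ?_⟩
        have hx : T (τ x) (μ x) = x := hTτμ x
        have hw' : w = Complex.exp ((c * τ x : ℝ) * Complex.I) := hw
        show (T (τ x) (μ x), Complex.exp ((c * τ x : ℝ) * Complex.I)) = (x, w)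
        rw [hx, hw']
    rw [continuous_iff_isClosed]
    intro C hC
    have himg : f ⁻¹' C = Prod.fst '' (GR ∩ Set.univ ×ˢ C) := by
      ext x
      constructor
      · intro hx
        refine ⟨(x, f x), ⟨?_, Set.mem_univ x, hx⟩, rfl⟩
        rw [hGRgraph]; exact rfl
      · rintro ⟨⟨x', w⟩, ⟨hmem, -, hwC⟩, rfl⟩
        rw [hGRgraph] at hmem
        have hw : w = f x' := hmem
        show f x' ∈ C
        rw [← hw]; exact hwC
    rw [himg]
    exact (((hGRc.inter_right (isClosed_univ.prod hC)).image continuous_fst)).isClosed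
  refine ⟨c, hcne, ⟨k, hkne, ?_⟩, f, hfc, habs, heigen⟩
  rw [hc, ← hk, zsmul_eq_mul]
  field_simp

end Flow


section FlowEasy
variable {X : Type*} [TopologicalSpace X] (T : ℝ → X → X)

theorem exp_two_pi_int (k : ℤ) : Complex.exp ((2 * Real.pi * (k : ℝ) : ℝ) * Complex.I) = 1 := by
  have : ((2 * Real.pi * (k : ℝ) : ℝ) : ℂ) * Complex.I = (k : ℂ) * (2 * (Real.pi : ℂ) * Complex.I) := by
    push_cast; ring
  rw [this]
  exact Complex.exp_int_mul_two_pi_mul_I k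

theorem flow_eigen_to_bad (x₀ : X) {s c : ℝ} (hc : c ≠ 0) {k : ℤ}
    (hcs : c * s = 2 * Real.pi * k)
    {f : X → ℂ} (hfc : Continuous f) (habs : ∀ x, ‖f x‖ = 1)
    (heig : ∀ t x, f (T t x) = Complex.exp ((c * t : ℝ) * Complex.I) * f x) :
    ∃ F : Set X, IsClosed F ∧ F.Nonempty ∧ F ≠ Set.univ ∧ T s '' F ⊆ F := by
  set v : ℂ := f x₀ with hv
  have hvne : v ≠ 0 := by
    intro h
    have := habs x₀
    rw [← hv, h] at this
    simp at this
  refine ⟨f ⁻¹' {v}, isClosed_singleton.preimage hfc, ⟨x₀, rfl⟩, ?_, ?_⟩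
  · intro huniv
    have hy : T (Real.pi / c) x₀ ∈ f ⁻¹' {v} := huniv ▸ Set.mem_univ _
    have hval : f (T (Real.pi / c) x₀) = -v := by
      rw [heig, ← hv]
      have h1 : c * (Real.pi / c) = Real.pi := by field_simp
      rw [h1, Complex.exp_pi_mul_I]
      ring
    have : -v = v := by
      have := hy
      simp only [Set.mem_preimage, Set.mem_singleton_iff] at this
      rw [hval] at this
      exact this
    have : v = 0 := by linear_combination (-1/2 : ℂ) * this
    exact hvne this
  · rintro - ⟨x, hx, rfl⟩
    simp only [Set.mem_preimage, Set.mem_singleton_iff] at hx ⊢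
    rw [heig, hcs, exp_two_pi_int, one_mul, hx]

theorem flow_eigen_zpow {c : ℝ} {f : X → ℂ} (n : ℤ) (hfc : Continuous f)
    (habs : ∀ x, ‖f x‖ = 1)
    (heig : ∀ t x, f (T t x) = Complex.exp ((c * t : ℝ) * Complex.I) * f x) :
    Continuous (fun x => f x ^ n) ∧ (∀ x, ‖f x ^ n‖ = 1) ∧
      ∀ t x, (f (T t x)) ^ n = Complex.exp (((n : ℝ) * c * t : ℝ) * Complex.I) * (f x) ^ n := by
  have hfne : ∀ x, f x ≠ 0 := by
    intro x h
    have := habs x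
    rw [h] at this
    simp at this
  refine ⟨hfc.zpow₀ n (fun x => Or.inl (hfne x)), ?_, ?_⟩
  · intro x
    rw [norm_zpow, habs x, one_zpow]
  · intro t x
    rw [heig, mul_zpow]
    congr 1
    rw [← Complex.exp_int_mul]
    congr 1
    push_cast
    ring

theorem flow_eigen_mul {c₁ c₂ : ℝ} {f₁ f₂ : X → ℂ}
    (heig₁ : ∀ t x, f₁ (T t x) = Complex.exp ((c₁ * t : ℝ) * Complex.I) * f₁ x)
    (heig₂ : ∀ t x, f₂ (T t x) = Complex.exp ((c₂ * t : ℝ) * Complex.I) * f₂ x) :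
    ∀ t x, (f₁ (T t x)) * (f₂ (T t x)) =
      Complex.exp (((c₁ + c₂) * t : ℝ) * Complex.I) * (f₁ x * f₂ x) := by
  intro t x
  rw [heig₁, heig₂]
  have : Complex.exp ((((c₁ + c₂) * t : ℝ) : ℂ) * Complex.I) =
      Complex.exp (((c₁ * t : ℝ) : ℂ) * Complex.I) *
        Complex.exp (((c₂ * t : ℝ) : ℂ) * Complex.I) := by
    rw [← Complex.exp_add]
    congr 1
    push_cast
    ring
  rw [this]
  ring

end FlowEasy


open WeakDual WeakDual.CharacterSpace

section Bridge
variable {A : Type*} [CommCStarAlgebra A]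

/-- A star algebra automorphism as an `AlgHom`. -/
noncomputable def starEquivAlgHom (e : A ≃⋆ₐ[ℂ] A) : A →ₐ[ℂ] A :=
  AlgHom.mk' { toFun := e, map_one' := map_one e, map_mul' := map_mul e,
               map_zero' := map_zero e, map_add' := map_add e }
    (fun c a => map_smul e c a)

@[simp] lemma starEquivAlgHom_apply (e : A ≃⋆ₐ[ℂ] A) (a : A) :
    starEquivAlgHom e a = e a := rfl

variable [Nontrivial A]

/-- The induced map on the character space. -/
noncomputable def charT (e : A ≃⋆ₐ[ℂ] A) (x : characterSpace ℂ A) : characterSpace ℂ A :=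
  equivAlgHom.symm ((equivAlgHom x).comp (starEquivAlgHom e))

@[simp] lemma charT_apply (e : A ≃⋆ₐ[ℂ] A) (x : characterSpace ℂ A) (a : A) :
    charT e x a = x (e a) := rfl

lemma char_norm_bound (x : characterSpace ℂ A) (a : A) : ‖x a‖ ≤ ‖a‖ :=
  spectrum.norm_le_norm_of_mem (AlgHom.apply_mem_spectrum x a)

lemma charT_continuous (α : ℝ → (A ≃⋆ₐ[ℂ] A))
    (hcont : ∀ a : A, Continuous fun t : ℝ => α t a) :
    Continuous fun p : ℝ × characterSpace ℂ A => charT (α p.1) p.2 := by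
  rw [continuous_induced_rng]
  apply WeakDual.continuous_of_continuous_eval
  intro a
  show Continuous fun p : ℝ × characterSpace ℂ A => (p.2 : WeakDual ℂ A) (α p.1 a)
  rw [continuous_iff_continuousAt]
  rintro ⟨t₀, x₀⟩
  have hdecomp : (fun p : ℝ × characterSpace ℂ A => (p.2 : WeakDual ℂ A) (α p.1 a)) =
      (fun p : ℝ × characterSpace ℂ A =>
        (p.2 : WeakDual ℂ A) (α p.1 a - α t₀ a) + (p.2 : WeakDual ℂ A) (α t₀ a)) := by
    funext p
    rw [map_sub]
    ring
  rw [hdecomp]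
  apply ContinuousAt.add
  · -- tends to 0, and at the point it IS 0
    have hbound : ∀ p : ℝ × characterSpace ℂ A,
        ‖(p.2 : WeakDual ℂ A) (α p.1 a - α t₀ a)‖ ≤ ‖α p.1 a - α t₀ a‖ := by
      intro p
      exact char_norm_bound p.2 _
    have hzero : Filter.Tendsto (fun p : ℝ × characterSpace ℂ A => α p.1 a - α t₀ a)
        (nhds (t₀, x₀)) (nhds 0) := by
      have : Continuous fun p : ℝ × characterSpace ℂ A => α p.1 a - α t₀ a :=
        ((hcont a).comp continuous_fst).sub continuous_const
      have h0 : α t₀ a - α t₀ a = 0 := sub_self _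
      simpa [h0] using (this.tendsto (t₀, x₀))
    have htends : Filter.Tendsto
        (fun p : ℝ × characterSpace ℂ A => (p.2 : WeakDual ℂ A) (α p.1 a - α t₀ a))
        (nhds (t₀, x₀)) (nhds 0) := by
      apply squeeze_zero_norm hbound
      simpa using hzero.norm
    unfold ContinuousAt
    simpa using htends
  · exact ContinuousAt.comp (WeakDual.eval_continuous (α t₀ a)).continuousAt
      (continuous_subtype_val.comp continuous_snd).continuousAt

/-- The vanishing ideal of a closed set of characters. -/
noncomputable def vanishingIdeal' (F : Set (characterSpace ℂ A)) : TwoSidedIdeal A :=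
  TwoSidedIdeal.mk' {a : A | ∀ x ∈ F, x a = 0}
    (fun x _ => map_zero x)
    (fun {a b} ha hb x hx => by rw [map_add, ha x hx, hb x hx, add_zero])
    (fun {a} ha x hx => by rw [map_neg, ha x hx, neg_zero])
    (fun {a b} hb x hx => by rw [map_mul, hb x hx, mul_zero])
    (fun {a b} ha x hx => by rw [map_mul, ha x hx, zero_mul])

lemma mem_vanishingIdeal' {F : Set (characterSpace ℂ A)} {a : A} :
    a ∈ vanishingIdeal' F ↔ ∀ x ∈ F, x a = 0 := by
  rw [vanishingIdeal', TwoSidedIdeal.mem_mk']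
  rfl

lemma vanishingIdeal'_closed (F : Set (characterSpace ℂ A)) :
    IsClosed ((vanishingIdeal' F : TwoSidedIdeal A) : Set A) := by
  have : ((vanishingIdeal' F : TwoSidedIdeal A) : Set A) =
      ⋂ x ∈ F, (fun a => (x : characterSpace ℂ A) a) ⁻¹' {0} := by
    ext a
    simp only [SetLike.mem_coe, mem_vanishingIdeal', Set.mem_iInter, Set.mem_preimage,
      Set.mem_singleton_iff]
  rw [this]
  exact isClosed_biInter fun x _ => isClosed_singleton.preimage (map_continuous x)

lemma vanishingIdeal'_ne_top {F : Set (characterSpace ℂ A)} (hne : F.Nonempty) :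
    vanishingIdeal' F ≠ ⊤ := by
  intro h
  obtain ⟨x, hx⟩ := hne
  have : (1 : A) ∈ vanishingIdeal' F := h ▸ TwoSidedIdeal.mem_top A
  have h1 := (mem_vanishingIdeal'.1 this) x hx
  rw [map_one] at h1
  exact one_ne_zero h1

lemma vanishingIdeal'_ne_bot {F : Set (characterSpace ℂ A)} (hF : IsClosed F)
    (hproper : F ≠ Set.univ) : vanishingIdeal' F ≠ ⊥ := by
  obtain ⟨x₀, hx₀⟩ : ∃ x₀, x₀ ∉ F := by
    by_contra h
    push_neg at h
    exact hproper (Set.eq_univ_of_forall h)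
  obtain ⟨g, hg0, hg1, -⟩ := exists_continuous_zero_one_of_isClosed hF
    (isClosed_singleton (x := x₀)) (by simp [Set.disjoint_singleton_right, hx₀])
  set gC : C(characterSpace ℂ A, ℂ) :=
    ⟨fun z => (g z : ℂ), Complex.continuous_ofReal.comp g.continuous⟩ with hgC
  set a : A := (gelfandStarTransform A).symm gC with ha
  have happ : ∀ x : characterSpace ℂ A, x a = gC x := by
    intro x
    have : gelfandStarTransform A a = gC := (gelfandStarTransform A).apply_symm_apply gC
    calc x a = (gelfandStarTransform A a) x := rfl
    _ = gC x := by rw [this]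
  intro hbot
  have hamem : a ∈ vanishingIdeal' F := by
    rw [mem_vanishingIdeal']
    intro x hx
    rw [happ x]
    simp [hgC, hg0 hx]
  rw [hbot, TwoSidedIdeal.mem_bot] at hamem
  have := happ x₀
  rw [hamem] at this
  simp only [map_zero] at this
  have : (g x₀ : ℂ) = 0 := this.symm
  rw [hg1 rfl] at this
  norm_num at this

lemma TwoSidedIdeal.eq_top_of_one_mem' {I : TwoSidedIdeal A} (h : (1 : A) ∈ I) : I = ⊤ := by
  refine SetLike.ext fun a => ?_
  constructor
  · intro _; exact TwoSidedIdeal.mem_top A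
  · intro _
    have := I.mul_mem_left a 1 h
    rwa [mul_one] at this

/-- The zero set of an ideal. -/
def zeroSet (I : TwoSidedIdeal A) : Set (characterSpace ℂ A) :=
  {x | ∀ a ∈ I, x a = 0}

lemma zeroSet_closed (I : TwoSidedIdeal A) : IsClosed (zeroSet I) := by
  have : zeroSet I = ⋂ a ∈ (I : Set A),
      (fun x : characterSpace ℂ A => x a) ⁻¹' {0} := by
    ext x
    simp only [zeroSet, Set.mem_setOf_eq, Set.mem_iInter, Set.mem_preimage,
      Set.mem_singleton_iff, SetLike.mem_coe]
  rw [this]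
  refine isClosed_biInter fun a _ => isClosed_singleton.preimage ?_
  exact (WeakDual.eval_continuous a).comp continuous_subtype_val

lemma zeroSet_nonempty {I : TwoSidedIdeal A} (hne : I ≠ ⊤) : (zeroSet I).Nonempty := by
  have hJ : TwoSidedIdeal.asIdeal I ≠ ⊤ := by
    intro h
    apply hne
    apply TwoSidedIdeal.eq_top_of_one_mem'
    have : (1 : A) ∈ TwoSidedIdeal.asIdeal I := h ▸ Submodule.mem_top
    exact TwoSidedIdeal.mem_asIdeal.1 this
  obtain ⟨Mx, hMx, hle⟩ := Ideal.exists_le_maximal _ hJ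
  haveI := hMx
  refine ⟨Mx.toCharacterSpace, fun a ha => ?_⟩
  exact Mx.toCharacterSpace_apply_eq_zero_of_mem (hle (TwoSidedIdeal.mem_asIdeal.2 ha))

lemma zeroSet_proper {I : TwoSidedIdeal A} (hbot : I ≠ ⊥) : zeroSet I ≠ Set.univ := by
  obtain ⟨a, haI, hane⟩ : ∃ a, a ∈ I ∧ a ≠ 0 := by
    by_contra h
    push_neg at h
    apply hbot
    refine SetLike.ext fun a => ?_
    rw [TwoSidedIdeal.mem_bot]
    exact ⟨fun ha => h a ha, fun ha => ha ▸ I.zero_mem⟩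
  intro huniv
  apply hane
  have hall : ∀ x : characterSpace ℂ A, x a = 0 := by
    intro x
    exact (huniv ▸ Set.mem_univ x : x ∈ zeroSet I) a haI
  have : gelfandStarTransform A a = gelfandStarTransform A 0 := by
    rw [map_zero]
    ext x
    exact hall x
  exact (gelfandStarTransform A).injective this

variable (α : ℝ → (A ≃⋆ₐ[ℂ] A))

lemma zeroSet_invariant {I : TwoSidedIdeal A} {s : ℝ} (hinv : ∀ a ∈ I, α s a ∈ I) :
    (fun x => charT (α s) x) '' (zeroSet I) ⊆ zeroSet I := by
  rintro - ⟨x, hx, rfl⟩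
  intro a ha
  rw [charT_apply]
  exact hx (α s a) (hinv a ha)

lemma vanishingIdeal'_invariant {F : Set (characterSpace ℂ A)} {s : ℝ}
    (hFinv : (fun x => charT (α s) x) '' F ⊆ F) :
    ∀ a ∈ vanishingIdeal' F, α s a ∈ vanishingIdeal' F := by
  intro a ha
  rw [mem_vanishingIdeal'] at ha ⊢
  intro x hx
  have : charT (α s) x ∈ F := hFinv ⟨x, hx, rfl⟩
  have h2 := ha _ this
  rwa [charT_apply] at h2

lemma char_minimal
    (hmin : ∀ I : TwoSidedIdeal A, IsClosed (I : Set A) →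
      (∀ t : ℝ, ∀ a ∈ I, α t a ∈ I) → I = ⊥ ∨ I = ⊤) :
    ∀ F : Set (characterSpace ℂ A), IsClosed F → F.Nonempty →
      (∀ t, (fun x => charT (α t) x) '' F ⊆ F) → F = Set.univ := by
  intro F hFcl hFne hFinv
  rcases hmin (vanishingIdeal' F) (vanishingIdeal'_closed F)
      (fun t => vanishingIdeal'_invariant α (hFinv t)) with hbot | htop
  · by_contra hne
    exact vanishingIdeal'_ne_bot hFcl hne hbot
  · exact absurd htop (vanishingIdeal'_ne_top hFne)

end Bridge


section Glue
open WeakDual WeakDual.CharacterSpace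

variable {A : Type*} [CommCStarAlgebra A] [Nontrivial A]

/-- Eigenvalue of the dual flow. -/
def EigenFn (α : ℝ → (A ≃⋆ₐ[ℂ] A)) (c : ℝ) : Prop :=
  ∃ f : characterSpace ℂ A → ℂ, Continuous f ∧ (∀ x, ‖f x‖ = 1) ∧
    ∀ (t : ℝ) (x : characterSpace ℂ A),
      f (charT (α t) x) = Complex.exp ((c * t : ℝ) * Complex.I) * f x

variable (α : ℝ → (A ≃⋆ₐ[ℂ] A))

theorem eigenFn_zsmul {c : ℝ} (n : ℤ) (h : EigenFn α c) : EigenFn α ((n : ℝ) * c) := by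
  obtain ⟨f, hfc, habs, heig⟩ := h
  obtain ⟨h1, h2, h3⟩ := flow_eigen_zpow (fun t (x : characterSpace ℂ A) => charT (α t) x)
    n hfc habs heig
  exact ⟨fun x => f x ^ n, h1, h2, h3⟩

theorem eigenFn_add {c₁ c₂ : ℝ} (h₁ : EigenFn α c₁) (h₂ : EigenFn α c₂) :
    EigenFn α (c₁ + c₂) := by
  obtain ⟨f₁, hfc₁, habs₁, heig₁⟩ := h₁
  obtain ⟨f₂, hfc₂, habs₂, heig₂⟩ := h₂
  refine ⟨fun x => f₁ x * f₂ x, hfc₁.mul hfc₂, ?_, ?_⟩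
  · intro x
    rw [norm_mul, habs₁, habs₂, one_mul]
  · exact flow_eigen_mul (fun t (x : characterSpace ℂ A) => charT (α t) x) heig₁ heig₂

theorem stmt9_badA
    (hgroup : ∀ t u : ℝ, ∀ a, α (t + u) a = α t (α u a))
    (hzero : ∀ a, α 0 a = a)
    (hcont : ∀ a : A, Continuous fun t : ℝ => α t a)
    (hmin : ∀ I : TwoSidedIdeal A, IsClosed (I : Set A) →
      (∀ t : ℝ, ∀ a ∈ I, α t a ∈ I) → I = ⊥ ∨ I = ⊤)
    {s : ℝ} (hs : s ≠ 0)
    {I : TwoSidedIdeal A} (hIc : IsClosed (I : Set A)) (hIinv : ∀ a ∈ I, α s a ∈ I)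
    (hIbot : I ≠ ⊥) (hItop : I ≠ ⊤) :
    ∃ c : ℝ, c ≠ 0 ∧ (∃ k : ℤ, k ≠ 0 ∧ c * s = 2 * Real.pi * k) ∧ EigenFn α c := by
  set T : ℝ → characterSpace ℂ A → characterSpace ℂ A := fun t x => charT (α t) x with hTdef
  have hadd : ∀ t u : ℝ, ∀ x, T (t + u) x = T t (T u x) := by
    intro t u x
    apply CharacterSpace.ext
    intro a
    show x (α (t + u) a) = x (α u (α t a))
    rw [add_comm, hgroup u t a]
  have h0 : ∀ x, T 0 x = x := by
    intro x
    apply CharacterSpace.ext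
    intro a
    show x (α 0 a) = x a
    rw [hzero]
  obtain ⟨c, hc, hk, f, hfc, habs, heig⟩ :=
    flow_bad_to_eigen T (charT_continuous α hcont) hadd h0 (char_minimal α hmin) hs
      (zeroSet_closed I) (zeroSet_nonempty hItop) (zeroSet_proper hIbot)
      (zeroSet_invariant α hIinv)
  exact ⟨c, hc, hk, f, hfc, habs, heig⟩

theorem stmt9_badB {s c : ℝ} (hc : c ≠ 0) {k : ℤ} (hcs : c * s = 2 * Real.pi * k)
    (hE : EigenFn α c) :
    ∃ I : TwoSidedIdeal A, IsClosed (I : Set A) ∧ (∀ a ∈ I, α s a ∈ I) ∧ I ≠ ⊥ ∧ I ≠ ⊤ := by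
  obtain ⟨f, hfc, habs, heig⟩ := hE
  have x₀ : characterSpace ℂ A := Classical.arbitrary _
  obtain ⟨F, hFcl, hFne, hFproper, hFinv⟩ :=
    flow_eigen_to_bad (fun t (x : characterSpace ℂ A) => charT (α t) x) x₀ hc hcs hfc habs heig
  exact ⟨vanishingIdeal' F, vanishingIdeal'_closed F, vanishingIdeal'_invariant α hFinv,
    vanishingIdeal'_ne_bot hFcl hFproper, vanishingIdeal'_ne_top hFne⟩

end Glue

/-- Let `(A, ℝ, α)` be a minimal C* dynamical system where `A` is a unital
commutative C*-algebra. Then the set `{0} ∪ { t ≠ 0 : α_{1/t} is not minimal }` is a ℚ-linear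
subspace of ℝ: it contains `0`, is closed under addition, and is closed under multiplication by
rational numbers. -/
theorem stmt_9 {A : Type*} [CommCStarAlgebra A]
    (α : ℝ → (A ≃⋆ₐ[ℂ] A))
    -- α is a one-parameter group of *-automorphisms
    (hgroup : ∀ t u : ℝ, ∀ a, α (t + u) a = α t (α u a))
    (hzero : ∀ a, α 0 a = a)
    -- t ↦ α_t(a) is norm-continuous for every a
    (hcont : ∀ a : A, Continuous fun t : ℝ => α t a)
    -- α is minimal
    (hmin : ∀ I : TwoSidedIdeal A, IsClosed (I : Set A) →
      (∀ t : ℝ, ∀ a ∈ I, α t a ∈ I) → I = ⊥ ∨ I = ⊤)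
    (S : Set ℝ)
    (hS : S = {0} ∪ {t : ℝ | t ≠ 0 ∧
        ¬ (∀ I : TwoSidedIdeal A, IsClosed (I : Set A) →
          (∀ a ∈ I, α (1 / t) a ∈ I) → I = ⊥ ∨ I = ⊤)}) :
    (0 : ℝ) ∈ S ∧ (∀ x ∈ S, ∀ y ∈ S, x + y ∈ S) ∧ (∀ (q : ℚ), ∀ x ∈ S, (q : ℝ) * x ∈ S) := by
  subst hS
  -- reformulation of badness
  have hbad_iff : ∀ t : ℝ,
      (¬ (∀ I : TwoSidedIdeal A, IsClosed (I : Set A) →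
          (∀ a ∈ I, α (1 / t) a ∈ I) → I = ⊥ ∨ I = ⊤)) ↔
      (∃ I : TwoSidedIdeal A, IsClosed (I : Set A) ∧ (∀ a ∈ I, α (1 / t) a ∈ I) ∧
        I ≠ ⊥ ∧ I ≠ ⊤) := by
    intro t
    constructor
    · intro h
      by_contra hne
      apply h
      intro I hc hinv
      by_contra hor
      push_neg at hor
      exact hne ⟨I, hc, hinv, hor.1, hor.2⟩
    · rintro ⟨I, hc, hinv, hbot, htop⟩ hall
      rcases hall I hc hinv with h | h
      · exact hbot h
      · exact htop h
  have hnontriv : ∀ {I : TwoSidedIdeal A}, I ≠ ⊥ → Nontrivial A := by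
    intro I hIbot
    by_contra hns
    rw [not_nontrivial_iff_subsingleton] at hns
    apply hIbot
    refine SetLike.ext fun a => ?_
    rw [TwoSidedIdeal.mem_bot]
    exact ⟨fun _ => Subsingleton.elim a 0,
      fun _ => by rw [Subsingleton.elim a (0 : A)]; exact TwoSidedIdeal.zero_mem I⟩
  have h0mem : (0 : ℝ) ∈ ({0} ∪ {t : ℝ | t ≠ 0 ∧
      ¬ (∀ I : TwoSidedIdeal A, IsClosed (I : Set A) →
        (∀ a ∈ I, α (1 / t) a ∈ I) → I = ⊥ ∨ I = ⊤)} : Set ℝ) := Or.inl rfl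
  refine ⟨h0mem, ?_, ?_⟩
  · -- additivity
    rintro x (hx | hx) y (hy | hy)
    · rw [Set.mem_singleton_iff] at hx hy
      rw [hx, hy, add_zero]
      exact h0mem
    · rw [Set.mem_singleton_iff] at hx
      rw [hx, zero_add]
      exact Or.inr hy
    · rw [Set.mem_singleton_iff] at hy
      rw [hy, add_zero]
      exact Or.inr hx
    · obtain ⟨hxne, hxbad⟩ := hx
      obtain ⟨hyne, hybad⟩ := hy
      by_cases hxy : x + y = 0
      · rw [hxy]; exact h0mem
      refine Or.inr ⟨hxy, (hbad_iff (x + y)).2 ?_⟩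
      obtain ⟨I, hIc, hIinv, hIbot, hItop⟩ := (hbad_iff x).1 hxbad
      obtain ⟨J, hJc, hJinv, hJbot, hJtop⟩ := (hbad_iff y).1 hybad
      haveI : Nontrivial A := hnontriv hIbot
      obtain ⟨c₁, hc₁, ⟨k₁, hk₁, hcs₁⟩, hE₁⟩ :=
        stmt9_badA α hgroup hzero hcont hmin (one_div_ne_zero hxne) hIc hIinv hIbot hItop
      obtain ⟨c₂, hc₂, ⟨k₂, hk₂, hcs₂⟩, hE₂⟩ :=
        stmt9_badA α hgroup hzero hcont hmin (one_div_ne_zero hyne) hJc hJinv hJbot hJtop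
      -- c₁ = 2π k₁ x ; c₂ = 2π k₂ y
      have hx1 : c₁ = 2 * Real.pi * k₁ * x := by
        field_simp at hcs₁
        linarith [hcs₁]
      have hy1 : c₂ = 2 * Real.pi * k₂ * y := by
        field_simp at hcs₂
        linarith [hcs₂]
      set c : ℝ := (k₂ : ℝ) * c₁ + (k₁ : ℝ) * c₂ with hcdef
      have hceq : c = 2 * Real.pi * ((k₁ * k₂ : ℤ) : ℝ) * (x + y) := by
        rw [hcdef, hx1, hy1]
        push_cast
        ring
      have hcne : c ≠ 0 := by
        rw [hceq]
        refine mul_ne_zero (mul_ne_zero (by positivity) ?_) hxy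
        exact_mod_cast mul_ne_zero hk₁ hk₂
      have hE : EigenFn α c := eigenFn_add α (eigenFn_zsmul α k₂ hE₁) (eigenFn_zsmul α k₁ hE₂)
      have hcs : c * (1 / (x + y)) = 2 * Real.pi * ((k₁ * k₂ : ℤ) : ℝ) := by
        rw [hceq]
        field_simp
      obtain ⟨I', h1, h2, h3, h4⟩ := stmt9_badB α hcne hcs hE
      exact ⟨I', h1, h2, h3, h4⟩
  · -- rational scaling
    rintro q x (hx | hx)
    · rw [Set.mem_singleton_iff] at hx
      rw [hx, mul_zero]
      exact h0mem
    · obtain ⟨hxne, hxbad⟩ := hx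
      by_cases hq : (q : ℝ) = 0
      · rw [hq, zero_mul]; exact h0mem
      have hqx : (q : ℝ) * x ≠ 0 := mul_ne_zero hq hxne
      refine Or.inr ⟨hqx, (hbad_iff ((q : ℝ) * x)).2 ?_⟩
      obtain ⟨I, hIc, hIinv, hIbot, hItop⟩ := (hbad_iff x).1 hxbad
      haveI : Nontrivial A := hnontriv hIbot
      obtain ⟨c₁, hc₁, ⟨k₁, hk₁, hcs₁⟩, hE₁⟩ :=
        stmt9_badA α hgroup hzero hcont hmin (one_div_ne_zero hxne) hIc hIinv hIbot hItop
      have hx1 : c₁ = 2 * Real.pi * k₁ * x := by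
        field_simp at hcs₁
        linarith [hcs₁]
      have hqnum : (q.num : ℝ) ≠ 0 := by
        rw [Int.cast_ne_zero, Rat.num_ne_zero]
        exact_mod_cast fun h => hq (by rw [h]; exact Rat.cast_zero)
      set c : ℝ := (q.num : ℝ) * c₁ with hcdef
      have hcne : c ≠ 0 := mul_ne_zero hqnum hc₁
      have hE : EigenFn α c := eigenFn_zsmul α q.num hE₁
      have hqcast : (q : ℝ) = (q.num : ℝ) / (q.den : ℝ) := by
        rw [Rat.cast_def]
      have hdenne : ((q.den : ℤ) : ℝ) ≠ 0 := by
        simp [q.den_nz]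
      have hcs : c * (1 / ((q : ℝ) * x)) = 2 * Real.pi * ((k₁ * q.den : ℤ) : ℝ) := by
        rw [hcdef, hx1, hqcast]
        have hden : (q.den : ℝ) ≠ 0 := by exact_mod_cast q.den_nz
        push_cast
        field_simp
      obtain ⟨I', h1, h2, h3, h4⟩ := stmt9_badB α hcne hcs hE
      exact ⟨I', h1, h2, h3, h4⟩
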